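/- Performance difference lemma: for any two stationary policies π1 and π2 of the MDP, (1−γ)·(J_{π1} − J_{π2}) = ⟨μ_{π1}, Q_{π2}(·, π1) − Q_{π2}(·, π2)⟩. -/

import Mathlib

open MeasureTheory ProbabilityTheory Filter Set

noncomputable section

variable {S A : Type*} [MeasurableSpace S] [MeasurableSpace A]

/-- One transition step of the MDP at the level of state-action laws:
from `(s,a) ~ ρ`, draw `s' ~ P(·|s,a)` and `a' ~ κ(·|s')`. -/
def mdpStep (P : Kernel (S × A) S) (κ : Kernel S A) (ρ : Measure (S × A)) :
    Measure (S × A) :=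
  ρ.bind fun sa => (P sa).bind fun s' => (κ s').map fun a' => (s', a')

/-- Initial state-action law: `s ~ μ`, `a ~ κ(·|s)`. -/
def mdpInit (κ : Kernel S A) (μ : Measure S) : Measure (S × A) :=
  μ.bind fun s => (κ s).map fun a => (s, a)

/-- Law of `(s_i, a_i)` for the (possibly non-stationary) policy `π` started at `μ0`. -/
def saLaw (P : Kernel (S × A) S) (π : ℕ → Kernel S A) (μ0 : Measure S) :
    ℕ → Measure (S × A)
  | 0 => mdpInit (π 0) μ0
  | i + 1 => mdpStep P (π (i + 1)) (saLaw P π μ0 i)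

/-- Expected discounted return `J_π`. -/
def retJ (P : Kernel (S × A) S) (π : ℕ → Kernel S A) (μ0 : Measure S) (γ : ℝ)
    (R : S × A → ℝ) : ℝ :=
  ∑' i : ℕ, γ ^ i * ∫ sa, R sa ∂(saLaw P π μ0 i)

/-- Law of `(s_i, a_i)` started from a state-action measure `ρ` at step 0. -/
def saLawFrom (P : Kernel (S × A) S) (π : ℕ → Kernel S A) (ρ : Measure (S × A)) :
    ℕ → Measure (S × A)
  | 0 => ρ
  | i + 1 => mdpStep P (π (i + 1)) (saLawFrom P π ρ i)

/-- State-action value function `Q_π(s, a)`. -/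
def Qval (P : Kernel (S × A) S) (π : ℕ → Kernel S A) (γ : ℝ) (R : S × A → ℝ)
    (sa : S × A) : ℝ :=
  ∑' i : ℕ, γ ^ i * ∫ x, R x ∂(saLawFrom P π (Measure.dirac sa) i)

/-- State value function `V_π(s)`. -/
def Vval (P : Kernel (S × A) S) (π : ℕ → Kernel S A) (γ : ℝ) (R : S × A → ℝ)
    (s : S) : ℝ :=
  retJ P π (Measure.dirac s) γ R

/-- Discounted state occupancy measure `μ_π = (1-γ) ∑ γ^i μ_{π,i}`. -/
def stateOcc (P : Kernel (S × A) S) (π : ℕ → Kernel S A) (μ0 : Measure S) (γ : ℝ) :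
    Measure S :=
  ENNReal.ofReal (1 - γ) •
    Measure.sum fun i => ENNReal.ofReal (γ ^ i) • (saLaw P π μ0 i).map Prod.fst

/-!
Write `Q` and `V` for the action- and state-value functions of the stationary policy `π₂`,
`ρₙ` for the law of `(sₙ, aₙ)` under `π₁` and `νₙ` for its state marginal, so that
`ρₙ = νₙ ⊗ π₁` and `νₙ₊₁ = P ∘ ρₙ`. The Bellman equation `Q(s, a) = R(s, a) + γ ⟨P(s, a), V⟩`
then gives `⟨νₙ, Q(·, π₁) - V⟩ = ⟨ρₙ, R⟩ + γ ⟨νₙ₊₁, V⟩ - ⟨νₙ, V⟩`. Weighting by `γⁿ` and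
summing, the `V`-terms telescope to `-⟨μ₀, V⟩ = -J_{π₂}` and the reward terms add up to
`J_{π₁}`; the factor `1 - γ` is the normalisation of the occupancy measure.
-/

section GeometricSeries

variable {γ C : ℝ}

lemma summable_geometric_mul_of_norm_le (hγ0 : 0 ≤ γ) (hγ1 : γ < 1) {a : ℕ → ℝ}
    (ha : ∀ n, ‖a n‖ ≤ C) : Summable fun n => γ ^ n * a n :=
  Summable.of_norm_bounded ((summable_geometric_of_lt_one hγ0 hγ1).mul_right C) fun n => by
    rw [norm_mul, norm_pow, Real.norm_of_nonneg hγ0]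
    exact mul_le_mul_of_nonneg_left (ha n) (pow_nonneg hγ0 n)

lemma norm_tsum_geometric_mul_le (hγ0 : 0 ≤ γ) (hγ1 : γ < 1) {a : ℕ → ℝ}
    (ha : ∀ n, ‖a n‖ ≤ C) : ‖∑' n, γ ^ n * a n‖ ≤ C / (1 - γ) := by
  have hgeom := (summable_geometric_of_lt_one hγ0 hγ1).mul_right C
  calc ‖∑' n, γ ^ n * a n‖ ≤ ∑' n, γ ^ n * C :=
        tsum_of_norm_bounded hgeom.hasSum fun n => by
          rw [norm_mul, norm_pow, Real.norm_of_nonneg hγ0]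
          exact mul_le_mul_of_nonneg_left (ha n) (pow_nonneg hγ0 n)
    _ = C / (1 - γ) := by rw [tsum_mul_right, tsum_geometric_of_lt_one hγ0 hγ1]; ring

lemma tsum_geometric_mul_telescope {r v : ℕ → ℝ} (hr : Summable fun n => γ ^ n * r n)
    (hv : Summable fun n => γ ^ n * v n) :
    ∑' n, γ ^ n * (r n + γ * v (n + 1) - v n) = ∑' n, γ ^ n * r n - v 0 := by
  have hshift : HasSum (fun n => γ ^ (n + 1) * v (n + 1)) (∑' n, γ ^ n * v n - v 0) := by
    simpa using (hasSum_nat_add_iff' 1 (f := fun n => γ ^ n * v n)).mpr hv.hasSum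
  have := (hr.hasSum.add hshift).sub hv.hasSum
  convert this.tsum_eq using 1
  · exact tsum_congr fun n => by ring
  · ring

end GeometricSeries

section Integrals

variable {α : Type*} [MeasurableSpace α] {μ : Measure α} {f : α → ℝ} {C : ℝ}

lemma norm_integral_le_of_forall_norm_le [IsProbabilityMeasure μ] (h : ∀ x, ‖f x‖ ≤ C) :
    ‖∫ x, f x ∂μ‖ ≤ C := by
  simpa using norm_integral_le_of_norm_le_const (μ := μ) (ae_of_all _ h)

lemma integrable_of_forall_norm_le [IsFiniteMeasure μ] (hf : Measurable f)
    (h : ∀ x, ‖f x‖ ≤ C) : Integrable f μ :=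
  Integrable.of_bound hf.aestronglyMeasurable C (ae_of_all _ h)

lemma measurable_tsum_of_summable {f : ℕ → α → ℝ} (hf : ∀ n, Measurable (f n))
    (hs : ∀ x, Summable fun n => f n x) : Measurable fun x => ∑' n, f n x :=
  measurable_of_tendsto_metrizable (fun _ => Finset.measurable_sum _ fun i _ => hf i)
    (tendsto_pi_nhds.mpr fun x => (hs x).hasSum.tendsto_sum_nat)

lemma integral_tsum_geometric_mul [IsProbabilityMeasure μ] {γ : ℝ} (hγ0 : 0 ≤ γ) (hγ1 : γ < 1)
    {g : ℕ → α → ℝ} (hg : ∀ n, Measurable (g n)) (hgC : ∀ n x, ‖g n x‖ ≤ C) :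
    ∫ x, ∑' n, γ ^ n * g n x ∂μ = ∑' n, γ ^ n * ∫ x, g n x ∂μ := by
  have hint : ∀ n, Integrable (fun x => γ ^ n * g n x) μ := fun n =>
    (integrable_of_forall_norm_le (hg n) (hgC n)).const_mul _
  have hsum : Summable fun n => ∫ x, ‖γ ^ n * g n x‖ ∂μ := by
    simp_rw [norm_mul, norm_pow, Real.norm_of_nonneg hγ0, integral_const_mul]
    exact summable_geometric_mul_of_norm_le hγ0 hγ1 fun n =>
      norm_integral_le_of_forall_norm_le fun x => by simpa using hgC n x
  rw [← integral_tsum_of_summable_integral_norm hint hsum]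
  exact tsum_congr fun _ => integral_const_mul _ _

end Integrals

namespace MeasureTheory.Measure

variable {α β : Type*} [MeasurableSpace α] [MeasurableSpace β]

lemma integral_bind {μ : Measure α} {κ : Kernel α β} {f : β → ℝ} (hf : Integrable f (κ ∘ₘ μ)) :
    ∫ y, f y ∂(κ ∘ₘ μ) = ∫ x, ∫ y, f y ∂(κ x) ∂μ := by
  rw [Measure.comp_eq_comp_const_apply] at hf ⊢
  rw [Kernel.integral_comp hf]
  simp only [Kernel.const_apply]

end MeasureTheory.Measure

section Occupancy

variable {α : Type*} [MeasurableSpace α] {ν : ℕ → Measure α} [∀ i, IsProbabilityMeasure (ν i)]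
  {f : α → ℝ} {γ C : ℝ}

lemma integral_sum_geometric_smul (hγ0 : 0 ≤ γ) (hγ1 : γ < 1) (hf : Measurable f)
    (hfC : ∀ x, ‖f x‖ ≤ C) :
    ∫ x, f x ∂(Measure.sum fun i => ENNReal.ofReal (γ ^ i) • ν i)
      = ∑' i, γ ^ i * ∫ x, f x ∂(ν i) := by
  have hint : ∀ i, Integrable f (ENNReal.ofReal (γ ^ i) • ν i) := fun i =>
    (integrable_of_forall_norm_le hf hfC).smul_measure ENNReal.ofReal_ne_top
  have hsmul : ∀ (g : α → ℝ) i, ∫ x, g x ∂(ENNReal.ofReal (γ ^ i) • ν i)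
      = γ ^ i * ∫ x, g x ∂(ν i) := fun g i => by
    rw [integral_smul_measure, ENNReal.toReal_ofReal (pow_nonneg hγ0 i), smul_eq_mul]
  have hsum : Summable fun i => ∫ x, ‖f x‖ ∂(ENNReal.ofReal (γ ^ i) • ν i) := by
    simp_rw [hsmul]
    exact summable_geometric_mul_of_norm_le hγ0 hγ1 fun i =>
      norm_integral_le_of_forall_norm_le fun x => by simpa using hfC x
  rw [integral_sum_measure (integrable_sum_measure hint hsum)]
  exact tsum_congr (hsmul f)

end Occupancy

namespace ProbabilityTheory.Kernel

lemma id_prod_apply_eq_map {X Y : Type*} [MeasurableSpace X] [MeasurableSpace Y]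
    (κ : Kernel X Y) [IsSFiniteKernel κ] (x : X) :
    (Kernel.id ×ₖ κ) x = (κ x).map fun y => (x, y) := by
  rw [Kernel.prod_apply, Kernel.id_apply, Measure.dirac_prod]

variable {X : Type*} [MeasurableSpace X]

instance isMarkovKernel_pow (κ : Kernel X X) [IsMarkovKernel κ] (n : ℕ) :
    IsMarkovKernel (κ ^ n) := by
  induction n with
  | zero => exact inferInstanceAs (IsMarkovKernel Kernel.id)
  | succ n ih => rw [pow_succ]; exact inferInstanceAs (IsMarkovKernel ((κ ^ n) ∘ₖ κ))

def discountedValue (κ : Kernel X X) (γ : ℝ) (r : X → ℝ) (x : X) : ℝ :=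
  ∑' n : ℕ, γ ^ n * ∫ y, r y ∂((κ ^ n) x)

variable {κ : Kernel X X} [IsMarkovKernel κ] {γ C : ℝ} {r : X → ℝ}

lemma norm_discountedValue_le (hγ0 : 0 ≤ γ) (hγ1 : γ < 1) (hrC : ∀ x, ‖r x‖ ≤ C) (x : X) :
    ‖κ.discountedValue γ r x‖ ≤ C / (1 - γ) :=
  norm_tsum_geometric_mul_le hγ0 hγ1 fun _ => norm_integral_le_of_forall_norm_le hrC

lemma measurable_discountedValue (hγ0 : 0 ≤ γ) (hγ1 : γ < 1) (hr : Measurable r)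
    (hrC : ∀ x, ‖r x‖ ≤ C) : Measurable (κ.discountedValue γ r) :=
  measurable_tsum_of_summable
    (fun _ => measurable_const.mul hr.stronglyMeasurable.integral_kernel.measurable)
    fun _ => summable_geometric_mul_of_norm_le hγ0 hγ1 fun _ =>
      norm_integral_le_of_forall_norm_le hrC

lemma integral_discountedValue (μ : Measure X) [IsProbabilityMeasure μ] (hγ0 : 0 ≤ γ)
    (hγ1 : γ < 1) (hr : Measurable r) (hrC : ∀ x, ‖r x‖ ≤ C) :
    ∫ x, κ.discountedValue γ r x ∂μ = ∑' n, γ ^ n * ∫ y, r y ∂((κ ^ n : Kernel X X) ∘ₘ μ) := by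
  unfold discountedValue
  rw [integral_tsum_geometric_mul hγ0 hγ1
    (fun _ => hr.stronglyMeasurable.integral_kernel.measurable)
    fun _ _ => norm_integral_le_of_forall_norm_le hrC]
  exact tsum_congr fun n => by
    rw [Measure.integral_bind (integrable_of_forall_norm_le hr hrC)]

lemma discountedValue_eq_add_integral (hγ0 : 0 ≤ γ) (hγ1 : γ < 1) (hr : Measurable r)
    (hrC : ∀ x, ‖r x‖ ≤ C) (x : X) :
    κ.discountedValue γ r x = r x + γ * ∫ y, κ.discountedValue γ r y ∂(κ x) := by
  have hpow_succ : ∀ n, ∫ y, r y ∂((κ ^ (n + 1)) x)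
      = ∫ z, ∫ y, r y ∂((κ ^ n) z) ∂(κ x) := fun n => by
    rw [pow_succ]
    exact Kernel.integral_comp (integrable_of_forall_norm_le hr hrC)
  unfold discountedValue
  rw [integral_tsum_geometric_mul hγ0 hγ1
    (fun _ => hr.stronglyMeasurable.integral_kernel.measurable)
    fun _ _ => norm_integral_le_of_forall_norm_le hrC,
    (summable_geometric_mul_of_norm_le hγ0 hγ1 fun _ =>
      norm_integral_le_of_forall_norm_le hrC).tsum_eq_zero_add, ← tsum_mul_left]
  congr 1
  · rw [pow_zero, one_mul, pow_zero]
    exact integral_dirac' r x hr.stronglyMeasurable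
  · exact tsum_congr fun n => by rw [hpow_succ, pow_succ]; ring

end ProbabilityTheory.Kernel

section MDP

def mdpStepKernel (P : Kernel (S × A) S) (κ : Kernel S A) : Kernel (S × A) (S × A) :=
  (Kernel.id ×ₖ κ) ∘ₖ P

instance (P : Kernel (S × A) S) [IsMarkovKernel P] (κ : Kernel S A) [IsMarkovKernel κ] :
    IsMarkovKernel (mdpStepKernel P κ) := by
  unfold mdpStepKernel; infer_instance

lemma mdpInit_eq_compProd (κ : Kernel S A) [IsSFiniteKernel κ] (μ : Measure S) [SFinite μ] :
    mdpInit κ μ = μ ⊗ₘ κ := by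
  rw [Measure.compProd_eq_comp_prod, mdpInit]
  exact congrArg μ.bind (funext fun s => (Kernel.id_prod_apply_eq_map κ s).symm)

lemma mdpStep_eq_comp (P : Kernel (S × A) S) (κ : Kernel S A) [IsSFiniteKernel κ]
    (ρ : Measure (S × A)) : mdpStep P κ ρ = mdpStepKernel P κ ∘ₘ ρ := by
  refine congrArg ρ.bind (funext fun sa => ?_)
  rw [mdpStepKernel, Kernel.comp_apply]
  exact congrArg (P sa).bind (funext fun s => (Kernel.id_prod_apply_eq_map κ s).symm)

lemma mdpStep_eq_compProd (P : Kernel (S × A) S) [IsSFiniteKernel P] (κ : Kernel S A)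
    [IsSFiniteKernel κ] (ρ : Measure (S × A)) [SFinite ρ] :
    mdpStep P κ ρ = (P ∘ₘ ρ) ⊗ₘ κ := by
  rw [mdpStep_eq_comp, mdpStepKernel, ← Measure.comp_assoc, Measure.compProd_eq_comp_prod]

lemma saLawFrom_const (P : Kernel (S × A) S) (κ : Kernel S A) [IsSFiniteKernel κ]
    (ρ : Measure (S × A)) (n : ℕ) :
    saLawFrom P (fun _ => κ) ρ n = (mdpStepKernel P κ ^ n : Kernel (S × A) (S × A)) ∘ₘ ρ := by
  induction n with
  | zero => exact Measure.id_comp.symm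
  | succ n ih => rw [saLawFrom, ih, mdpStep_eq_comp, Measure.comp_assoc, pow_succ']; rfl

lemma saLaw_eq_saLawFrom (P : Kernel (S × A) S) (π : ℕ → Kernel S A) (μ0 : Measure S) (n : ℕ) :
    saLaw P π μ0 n = saLawFrom P π (mdpInit (π 0) μ0) n := by
  induction n with
  | zero => rfl
  | succ n ih => rw [saLaw, saLawFrom, ih]

instance isProbabilityMeasure_saLaw (P : Kernel (S × A) S) [IsMarkovKernel P]
    (π : ℕ → Kernel S A) [∀ i, IsMarkovKernel (π i)] (μ0 : Measure S) [IsProbabilityMeasure μ0]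
    (n : ℕ) : IsProbabilityMeasure (saLaw P π μ0 n) := by
  induction n with
  | zero => rw [saLaw, mdpInit_eq_compProd]; infer_instance
  | succ n ih => rw [saLaw, mdpStep_eq_comp]; infer_instance

lemma Qval_const_eq_discountedValue (P : Kernel (S × A) S) (κ : Kernel S A) [IsSFiniteKernel κ]
    (γ : ℝ) (R : S × A → ℝ) :
    Qval P (fun _ => κ) γ R = (mdpStepKernel P κ).discountedValue γ R := by
  funext sa
  refine tsum_congr fun n => ?_
  rw [saLawFrom_const, Measure.dirac_bind (Kernel.measurable _)]

end MDP

section ValueFunctions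

variable {P : Kernel (S × A) S} [IsMarkovKernel P] {κ : Kernel S A} [IsMarkovKernel κ]
  {γ C : ℝ} {R : S × A → ℝ}

lemma measurable_Qval_const (hγ0 : 0 ≤ γ) (hγ1 : γ < 1) (hR : Measurable R)
    (hRC : ∀ sa, ‖R sa‖ ≤ C) : Measurable (Qval P (fun _ => κ) γ R) := by
  rw [Qval_const_eq_discountedValue P κ γ R]
  exact Kernel.measurable_discountedValue hγ0 hγ1 hR hRC

lemma norm_Qval_const_le (hγ0 : 0 ≤ γ) (hγ1 : γ < 1) (hRC : ∀ sa, ‖R sa‖ ≤ C) (sa : S × A) :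
    ‖Qval P (fun _ => κ) γ R sa‖ ≤ C / (1 - γ) := by
  rw [Qval_const_eq_discountedValue P κ γ R]
  exact Kernel.norm_discountedValue_le hγ0 hγ1 hRC sa

lemma retJ_const_eq_integral_Qval (μ0 : Measure S) [IsProbabilityMeasure μ0] (hγ0 : 0 ≤ γ)
    (hγ1 : γ < 1) (hR : Measurable R) (hRC : ∀ sa, ‖R sa‖ ≤ C) :
    retJ P (fun _ => κ) μ0 γ R = ∫ sa, Qval P (fun _ => κ) γ R sa ∂(μ0 ⊗ₘ κ) := by
  rw [Qval_const_eq_discountedValue P κ γ R, Kernel.integral_discountedValue _ hγ0 hγ1 hR hRC]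
  refine tsum_congr fun n => ?_
  rw [saLaw_eq_saLawFrom, saLawFrom_const, mdpInit_eq_compProd]

lemma integral_compProd_Qval (μ : Measure S) [IsProbabilityMeasure μ] (hγ0 : 0 ≤ γ)
    (hγ1 : γ < 1) (hR : Measurable R) (hRC : ∀ sa, ‖R sa‖ ≤ C) :
    ∫ sa, Qval P (fun _ => κ) γ R sa ∂(μ ⊗ₘ κ)
      = ∫ s, ∫ a, Qval P (fun _ => κ) γ R (s, a) ∂(κ s) ∂μ :=
  Measure.integral_compProd
    (integrable_of_forall_norm_le (measurable_Qval_const hγ0 hγ1 hR hRC)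
      (norm_Qval_const_le hγ0 hγ1 hRC))

lemma Vval_const_eq_integral_Qval (hγ0 : 0 ≤ γ) (hγ1 : γ < 1) (hR : Measurable R)
    (hRC : ∀ sa, ‖R sa‖ ≤ C) (s : S) :
    Vval P (fun _ => κ) γ R s = ∫ a, Qval P (fun _ => κ) γ R (s, a) ∂(κ s) := by
  rw [Vval, retJ_const_eq_integral_Qval _ hγ0 hγ1 hR hRC,
    integral_compProd_Qval _ hγ0 hγ1 hR hRC]
  exact integral_dirac' _ s
    (measurable_Qval_const hγ0 hγ1 hR hRC).stronglyMeasurable.integral_kernel_prod_right'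

lemma measurable_integral_Qval_const (π' : Kernel S A) [IsSFiniteKernel π'] (hγ0 : 0 ≤ γ)
    (hγ1 : γ < 1) (hR : Measurable R) (hRC : ∀ sa, ‖R sa‖ ≤ C) :
    Measurable fun s => ∫ a, Qval P (fun _ => κ) γ R (s, a) ∂(π' s) :=
  (measurable_Qval_const hγ0 hγ1 hR hRC).stronglyMeasurable.integral_kernel_prod_right'.measurable

lemma norm_integral_Qval_const_le (π' : Kernel S A) [IsMarkovKernel π'] (hγ0 : 0 ≤ γ)
    (hγ1 : γ < 1) (hRC : ∀ sa, ‖R sa‖ ≤ C) (s : S) :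
    ‖∫ a, Qval P (fun _ => κ) γ R (s, a) ∂(π' s)‖ ≤ C / (1 - γ) :=
  norm_integral_le_of_forall_norm_le fun a => norm_Qval_const_le hγ0 hγ1 hRC (s, a)

lemma measurable_Vval_const (hγ0 : 0 ≤ γ) (hγ1 : γ < 1) (hR : Measurable R)
    (hRC : ∀ sa, ‖R sa‖ ≤ C) : Measurable (Vval P (fun _ => κ) γ R) := by
  simp_rw [funext (Vval_const_eq_integral_Qval hγ0 hγ1 hR hRC)]
  exact measurable_integral_Qval_const κ hγ0 hγ1 hR hRC

lemma norm_Vval_const_le (hγ0 : 0 ≤ γ) (hγ1 : γ < 1) (hR : Measurable R)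
    (hRC : ∀ sa, ‖R sa‖ ≤ C) (s : S) : ‖Vval P (fun _ => κ) γ R s‖ ≤ C / (1 - γ) := by
  rw [Vval_const_eq_integral_Qval hγ0 hγ1 hR hRC]
  exact norm_integral_Qval_const_le κ hγ0 hγ1 hRC s

lemma retJ_const_eq_integral_Vval (μ0 : Measure S) [IsProbabilityMeasure μ0] (hγ0 : 0 ≤ γ)
    (hγ1 : γ < 1) (hR : Measurable R) (hRC : ∀ sa, ‖R sa‖ ≤ C) :
    retJ P (fun _ => κ) μ0 γ R = ∫ s, Vval P (fun _ => κ) γ R s ∂μ0 := by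
  rw [retJ_const_eq_integral_Qval _ hγ0 hγ1 hR hRC, integral_compProd_Qval _ hγ0 hγ1 hR hRC]
  simp_rw [Vval_const_eq_integral_Qval hγ0 hγ1 hR hRC]

lemma Qval_const_eq_add_integral_Vval (hγ0 : 0 ≤ γ) (hγ1 : γ < 1) (hR : Measurable R)
    (hRC : ∀ sa, ‖R sa‖ ≤ C) (sa : S × A) :
    Qval P (fun _ => κ) γ R sa = R sa + γ * ∫ s, Vval P (fun _ => κ) γ R s ∂(P sa) := by
  have hQ := measurable_Qval_const (P := P) (κ := κ) hγ0 hγ1 hR hRC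
  have hV : ∀ s, ∫ x, Qval P (fun _ => κ) γ R x ∂((Kernel.id ×ₖ κ) s)
      = Vval P (fun _ => κ) γ R s := fun s => by
    rw [Vval_const_eq_integral_Qval hγ0 hγ1 hR hRC, Kernel.id_prod_apply_eq_map,
      integral_map measurable_prodMk_left.aemeasurable hQ.aestronglyMeasurable]
  rw [Qval_const_eq_discountedValue P κ γ R, Kernel.discountedValue_eq_add_integral hγ0 hγ1 hR hRC,
    ← Qval_const_eq_discountedValue P κ γ R, mdpStepKernel, Kernel.comp_apply,
    Measure.integral_bind (integrable_of_forall_norm_le hQ (norm_Qval_const_le hγ0 hγ1 hRC))]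
  simp_rw [hV]

end ValueFunctions

section Trajectory

lemma fst_saLaw_zero (P : Kernel (S × A) S) (π : ℕ → Kernel S A) [IsMarkovKernel (π 0)]
    (μ0 : Measure S) [SFinite μ0] : (saLaw P π μ0 0).fst = μ0 := by
  rw [saLaw, mdpInit_eq_compProd, Measure.fst_compProd]

variable {P : Kernel (S × A) S} [IsMarkovKernel P] {π : ℕ → Kernel S A}
  [∀ i, IsMarkovKernel (π i)] {μ0 : Measure S} [IsProbabilityMeasure μ0]

lemma fst_saLaw_succ (n : ℕ) : (saLaw P π μ0 (n + 1)).fst = P ∘ₘ saLaw P π μ0 n := by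
  rw [saLaw, mdpStep_eq_compProd, Measure.fst_compProd]

lemma fst_saLaw_compProd (n : ℕ) : (saLaw P π μ0 n).fst ⊗ₘ π n = saLaw P π μ0 n := by
  cases n with
  | zero => rw [fst_saLaw_zero, saLaw, mdpInit_eq_compProd]
  | succ n => rw [fst_saLaw_succ, saLaw, mdpStep_eq_compProd]

lemma integral_stateOcc {γ C : ℝ} (hγ0 : 0 ≤ γ) (hγ1 : γ < 1) {f : S → ℝ} (hf : Measurable f)
    (hfC : ∀ s, ‖f s‖ ≤ C) :
    ∫ s, f s ∂(stateOcc P π μ0 γ) = (1 - γ) * ∑' i, γ ^ i * ∫ s, f s ∂(saLaw P π μ0 i).fst := by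
  -- `stateOcc` is written with `map Prod.fst`, which instance search does not see as `.fst`
  have (i : ℕ) : IsProbabilityMeasure ((saLaw P π μ0 i).map Prod.fst) :=
    inferInstanceAs (IsProbabilityMeasure (saLaw P π μ0 i).fst)
  rw [stateOcc, integral_smul_measure, ENNReal.toReal_ofReal (by linarith), smul_eq_mul]
  exact congrArg _ (integral_sum_geometric_smul hγ0 hγ1 hf hfC)

variable {κ : Kernel S A} [IsMarkovKernel κ] {γ C : ℝ} {R : S × A → ℝ}

lemma integral_Qval_saLaw (hγ0 : 0 ≤ γ) (hγ1 : γ < 1) (hR : Measurable R)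
    (hRC : ∀ sa, ‖R sa‖ ≤ C) (n : ℕ) :
    ∫ sa, Qval P (fun _ => κ) γ R sa ∂(saLaw P π μ0 n)
      = ∫ sa, R sa ∂(saLaw P π μ0 n)
        + γ * ∫ s, Vval P (fun _ => κ) γ R s ∂(saLaw P π μ0 (n + 1)).fst := by
  have hV := integrable_of_forall_norm_le (μ := P ∘ₘ saLaw P π μ0 n)
    (measurable_Vval_const (P := P) (κ := κ) hγ0 hγ1 hR hRC) (norm_Vval_const_le hγ0 hγ1 hR hRC)
  have hPV : Integrable (fun sa => ∫ s, Vval P (fun _ => κ) γ R s ∂(P sa)) (saLaw P π μ0 n) :=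
    integrable_of_forall_norm_le
      (measurable_Vval_const hγ0 hγ1 hR hRC).stronglyMeasurable.integral_kernel.measurable
      fun _ => norm_integral_le_of_forall_norm_le (norm_Vval_const_le hγ0 hγ1 hR hRC)
  simp_rw [Qval_const_eq_add_integral_Vval hγ0 hγ1 hR hRC]
  rw [integral_add (integrable_of_forall_norm_le hR hRC) (hPV.const_mul γ), integral_const_mul,
    fst_saLaw_succ, Measure.integral_bind hV]

lemma integral_advantage_saLaw (hγ0 : 0 ≤ γ) (hγ1 : γ < 1) (hR : Measurable R)
    (hRC : ∀ sa, ‖R sa‖ ≤ C) (n : ℕ) :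
    ∫ s, (∫ a, Qval P (fun _ => κ) γ R (s, a) ∂(π n s) - Vval P (fun _ => κ) γ R s)
        ∂(saLaw P π μ0 n).fst
      = ∫ sa, R sa ∂(saLaw P π μ0 n)
        + γ * ∫ s, Vval P (fun _ => κ) γ R s ∂(saLaw P π μ0 (n + 1)).fst
        - ∫ s, Vval P (fun _ => κ) γ R s ∂(saLaw P π μ0 n).fst := by
  rw [integral_sub (integrable_of_forall_norm_le (measurable_integral_Qval_const _ hγ0 hγ1 hR hRC)
      (norm_integral_Qval_const_le _ hγ0 hγ1 hRC))
      (integrable_of_forall_norm_le (measurable_Vval_const hγ0 hγ1 hR hRC)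
      (norm_Vval_const_le hγ0 hγ1 hR hRC)),
    ← Measure.integral_compProd (integrable_of_forall_norm_le
      (measurable_Qval_const hγ0 hγ1 hR hRC) (norm_Qval_const_le hγ0 hγ1 hRC)),
    fst_saLaw_compProd, integral_Qval_saLaw hγ0 hγ1 hR hRC]

lemma tsum_integral_advantage_saLaw (hγ0 : 0 ≤ γ) (hγ1 : γ < 1) (hR : Measurable R)
    (hRC : ∀ sa, ‖R sa‖ ≤ C) :
    ∑' n, γ ^ n * ∫ s, (∫ a, Qval P (fun _ => κ) γ R (s, a) ∂(π n s)
        - Vval P (fun _ => κ) γ R s) ∂(saLaw P π μ0 n).fst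
      = retJ P π μ0 γ R - retJ P (fun _ => κ) μ0 γ R := by
  have hr : Summable fun n => γ ^ n * ∫ sa, R sa ∂(saLaw P π μ0 n) :=
    summable_geometric_mul_of_norm_le hγ0 hγ1 fun _ => norm_integral_le_of_forall_norm_le hRC
  have hv : Summable fun n => γ ^ n * ∫ s, Vval P (fun _ => κ) γ R s ∂(saLaw P π μ0 n).fst :=
    summable_geometric_mul_of_norm_le hγ0 hγ1 fun _ =>
      norm_integral_le_of_forall_norm_le (norm_Vval_const_le hγ0 hγ1 hR hRC)
  simp_rw [integral_advantage_saLaw hγ0 hγ1 hR hRC]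
  rw [tsum_geometric_mul_telescope hr hv, fst_saLaw_zero,
    ← retJ_const_eq_integral_Vval μ0 hγ0 hγ1 hR hRC]
  rfl

end Trajectory

/-- **Performance difference lemma** (Statement 0):
for any two stationary policies `π1`, `π2`,
`(1 - γ) * (J_{π1} - J_{π2}) = ⟨μ_{π1}, Q_{π2}(·, π1) - Q_{π2}(·, π2)⟩`. -/
theorem performance_difference_lemma
    (P : Kernel (S × A) S) [IsMarkovKernel P]
    (π1 π2 : Kernel S A) [IsMarkovKernel π1] [IsMarkovKernel π2]
    (μ0 : Measure S) [IsProbabilityMeasure μ0]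
    (γ : ℝ) (hγ : γ ∈ Set.Ioo (0 : ℝ) 1)
    (Rmax : ℝ) (R : S × A → ℝ) (hRmeas : Measurable R)
    (hRrange : ∀ sa, R sa ∈ Set.Icc 0 Rmax) :
    (1 - γ) * (retJ P (fun _ => π1) μ0 γ R - retJ P (fun _ => π2) μ0 γ R) =
      ∫ s,
        ((∫ a, Qval P (fun _ => π2) γ R (s, a) ∂(π1 s)) -
          (∫ a, Qval P (fun _ => π2) γ R (s, a) ∂(π2 s)))
        ∂(stateOcc P (fun _ => π1) μ0 γ) := by
  obtain ⟨hγ0, hγ1⟩ := Set.mem_Ioo.mp hγ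
  replace hγ0 := hγ0.le
  have hRC (sa : S × A) : ‖R sa‖ ≤ Rmax := by
    rw [Real.norm_of_nonneg (hRrange sa).1]; exact (hRrange sa).2
  simp_rw [← Vval_const_eq_integral_Qval hγ0 hγ1 hRmeas hRC]
  have hA_meas : Measurable fun s =>
      ∫ a, Qval P (fun _ => π2) γ R (s, a) ∂(π1 s) - Vval P (fun _ => π2) γ R s :=
    (measurable_integral_Qval_const π1 hγ0 hγ1 hRmeas hRC).sub
      (measurable_Vval_const hγ0 hγ1 hRmeas hRC)
  have hA_le (s : S) :
      ‖∫ a, Qval P (fun _ => π2) γ R (s, a) ∂(π1 s) - Vval P (fun _ => π2) γ R s‖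
        ≤ Rmax / (1 - γ) + Rmax / (1 - γ) :=
    (norm_sub_le _ _).trans (add_le_add (norm_integral_Qval_const_le π1 hγ0 hγ1 hRC s)
      (norm_Vval_const_le hγ0 hγ1 hRmeas hRC s))
  rw [integral_stateOcc hγ0 hγ1 hA_meas hA_le,
    tsum_integral_advantage_saLaw (π := fun _ => π1) hγ0 hγ1 hRmeas hRC]
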